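/- arXiv:2402.15210 — 2 statements merged into one kernel-verified Lean document; each statement's English description precedes it below -/
import Mathlib

section
/- Let T > 0 and C > 0. Let φ : [0,T] → ℝ be a nonnegative differentiable function with φ(0) = φ₀ ≥ 0, let ψ : [0,T] → ℝ be a nonnegative continuous function, and let h, g : [0,T] → ℝ be positive continuous functions. Assume that for all t ∈ [0,T], φ'(t) + ψ(t) ≤ C·φ(t)³ + h(t)·φ(t) + g(t). Let T₁ with 0 ≤ T₁ ≤ T be such that C·∫₀^{T₁} (2φ₀ + 2∫₀ˢ g(τ) dτ)² ds + ∫₀^{T₁} h(s) ds ≤ (1/2)·log(3/2). Then for all t ∈ [0,T₁], φ(t) + ∫₀ᵗ ψ(s) ds ≤ 2·(φ₀ + ∫₀ᵗ g(s) ds). -/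
open MeasureTheory intervalIntegral Set Topology Filter

lemma cgw_intervalIntegrable {T : ℝ} {f : ℝ → ℝ} (hf : ContinuousOn f (Icc 0 T))
    {x y : ℝ} (hx : x ∈ Icc (0:ℝ) T) (hy : y ∈ Icc (0:ℝ) T) :
    IntervalIntegrable f volume x y := by
  apply (hf.mono ?_).intervalIntegrable
  rw [uIcc]
  exact Icc_subset_Icc (le_min hx.1 hy.1) (max_le hx.2 hy.2)

lemma cgw_primitive_hasDerivWithinAt {T : ℝ} {f : ℝ → ℝ} (hf : ContinuousOn f (Icc 0 T))
    {x : ℝ} (hx : x ∈ Ico (0:ℝ) T) :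
    HasDerivWithinAt (fun u => ∫ s in (0:ℝ)..u, f s) (f x) (Ici x) x := by
  have hmem : Icc (0:ℝ) T ∈ 𝓝[>] x :=
    mem_nhdsWithin.mpr ⟨Iio T, isOpen_Iio, hx.2,
      fun y hy => ⟨hx.1.trans hy.2.le, hy.1.le⟩⟩
  have hcw : ContinuousWithinAt f (Ioi x) x :=
    (hf x ⟨hx.1, hx.2.le⟩).mono_of_mem_nhdsWithin hmem
  have hint : IntervalIntegrable f volume 0 x :=
    cgw_intervalIntegrable hf ⟨le_rfl, hx.1.trans hx.2.le⟩ ⟨hx.1, hx.2.le⟩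
  exact intervalIntegral.integral_hasDerivWithinAt_right hint
    ⟨Icc 0 T, hmem, hf.aestronglyMeasurable measurableSet_Icc⟩ hcw

lemma cgw_primitive_continuousOn {T : ℝ} (hT : 0 ≤ T) {f : ℝ → ℝ}
    (hf : ContinuousOn f (Icc 0 T)) :
    ContinuousOn (fun u => ∫ s in (0:ℝ)..u, f s) (Icc 0 T) := by
  have := continuousOn_primitive_interval (a := (0:ℝ)) (b := T) (f := f) (μ := volume) ?_
  · rwa [uIcc_of_le hT] at this
  · rw [uIcc_of_le hT]; exact hf.integrableOn_Icc

set_option maxHeartbeats 1000000 in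
/-- A consequence of the Gronwall lemma: a local-in-time a priori bound for a
nonnegative quantity `φ` satisfying the differential inequality
`φ' + ψ ≤ C φ³ + h φ + g` with a cubic nonlinearity. -/
theorem cubic_gronwall_local_bound {T C : ℝ} (hT : 0 < T) (hC : 0 < C)
    (φ φ' ψ h g : ℝ → ℝ) (φ₀ : ℝ) (hφ₀ : 0 ≤ φ₀) (hφ0 : φ 0 = φ₀)
    (hφ_deriv : ∀ t ∈ Icc (0 : ℝ) T, HasDerivAt φ (φ' t) t)
    (hφ_nonneg : ∀ t ∈ Icc (0 : ℝ) T, 0 ≤ φ t)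
    (hψ_nonneg : ∀ t ∈ Icc (0 : ℝ) T, 0 ≤ ψ t)
    (hψ_cont : ContinuousOn ψ (Icc (0 : ℝ) T))
    (hh_pos : ∀ t ∈ Icc (0 : ℝ) T, 0 < h t)
    (hh_cont : ContinuousOn h (Icc (0 : ℝ) T))
    (hg_pos : ∀ t ∈ Icc (0 : ℝ) T, 0 < g t)
    (hg_cont : ContinuousOn g (Icc (0 : ℝ) T))
    (hineq : ∀ t ∈ Icc (0 : ℝ) T, φ' t + ψ t ≤ C * (φ t) ^ 3 + h t * φ t + g t)
    (T₁ : ℝ) (hT₁ : T₁ ∈ Icc (0 : ℝ) T)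
    (hsmall : C * (∫ s in (0 : ℝ)..T₁, (2 * φ₀ + 2 * ∫ τ in (0 : ℝ)..s, g τ) ^ 2)
        + (∫ s in (0 : ℝ)..T₁, h s) ≤ (1 / 2) * Real.log (3 / 2)) :
    ∀ t ∈ Icc (0 : ℝ) T₁,
      φ t + ∫ s in (0 : ℝ)..t, ψ s ≤ 2 * (φ₀ + ∫ s in (0 : ℝ)..t, g s) := by
  have hT₁T : T₁ ≤ T := hT₁.2
  have hsub : Icc (0:ℝ) T₁ ⊆ Icc 0 T := Icc_subset_Icc le_rfl hT₁T
  -- abbreviations (kept as plain definitions, with defining equations)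
  set G : ℝ → ℝ := fun u => ∫ s in (0:ℝ)..u, g s with hGdef
  set Ψ : ℝ → ℝ := fun u => ∫ s in (0:ℝ)..u, ψ s with hΨdef
  set M : ℝ → ℝ := fun u => φ₀ + G u with hMdef
  set a : ℝ → ℝ := fun u => C * (2 * M u) ^ 2 + h u with hadef
  set A : ℝ → ℝ := fun u => ∫ s in (0:ℝ)..u, a s with hAdef
  set F : ℝ → ℝ := fun u => φ u + Ψ u with hFdef
  set B : ℝ → ℝ := fun u => 3 / 2 * (Real.exp (A u) * M u) with hBdef
  -- continuity facts
  have hGc : ContinuousOn G (Icc 0 T) := cgw_primitive_continuousOn hT.le hg_cont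
  have hMc : ContinuousOn M (Icc 0 T) := continuousOn_const.add hGc
  have hac : ContinuousOn a (Icc 0 T) :=
    (continuousOn_const.mul ((continuousOn_const.mul hMc).pow 2)).add hh_cont
  have hAc : ContinuousOn A (Icc 0 T) := cgw_primitive_continuousOn hT.le hac
  have hBc : ContinuousOn B (Icc 0 T) :=
    continuousOn_const.mul ((Real.continuous_exp.comp_continuousOn hAc).mul hMc)
  have hΨc : ContinuousOn Ψ (Icc 0 T) := cgw_primitive_continuousOn hT.le hψ_cont
  have hφc : ContinuousOn φ (Icc 0 T) := fun u hu =>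
    ((hφ_deriv u hu).continuousAt).continuousWithinAt
  have hFc : ContinuousOn F (Icc 0 T) := hφc.add hΨc
  -- nonnegativity facts
  have hGnn : ∀ u ∈ Icc (0:ℝ) T, 0 ≤ G u := fun u hu =>
    intervalIntegral.integral_nonneg hu.1
      (fun s hs => (hg_pos s ⟨hs.1, hs.2.trans hu.2⟩).le)
  have hMnn : ∀ u ∈ Icc (0:ℝ) T, 0 ≤ M u := fun u hu => by
    have := hGnn u hu; rw [hMdef]; dsimp only; linarith
  have hann : ∀ u ∈ Icc (0:ℝ) T, 0 ≤ a u := fun u hu => by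
    have h1 := (hh_pos u hu).le
    have h2 : 0 ≤ C * (2 * M u) ^ 2 := mul_nonneg hC.le (sq_nonneg _)
    rw [hadef]; dsimp only; linarith
  have hAnn : ∀ u ∈ Icc (0:ℝ) T, 0 ≤ A u := fun u hu =>
    intervalIntegral.integral_nonneg hu.1
      (fun s hs => hann s ⟨hs.1, hs.2.trans hu.2⟩)
  have hΨnn : ∀ u ∈ Icc (0:ℝ) T, 0 ≤ Ψ u := fun u hu =>
    intervalIntegral.integral_nonneg hu.1
      (fun s hs => hψ_nonneg s ⟨hs.1, hs.2.trans hu.2⟩)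
  -- the smallness bound on A
  have hAT₁ : A T₁ ≤ (1 / 2) * Real.log (3 / 2) := by
    have hi1 : IntervalIntegrable (fun u => C * (2 * M u) ^ 2) volume 0 T₁ :=
      cgw_intervalIntegrable (continuousOn_const.mul ((continuousOn_const.mul hMc).pow 2))
        ⟨le_rfl, hT.le⟩ hT₁
    have hi2 : IntervalIntegrable h volume 0 T₁ :=
      cgw_intervalIntegrable hh_cont ⟨le_rfl, hT.le⟩ hT₁
    have hsplit : A T₁ = (∫ s in (0:ℝ)..T₁, C * (2 * M s) ^ 2) + ∫ s in (0:ℝ)..T₁, h s := by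
      rw [hAdef]; dsimp only
      rw [show (fun s => a s) = fun s => C * (2 * M s) ^ 2 + h s by rw [hadef]]
      exact intervalIntegral.integral_add hi1 hi2
    have hc1 : (∫ s in (0:ℝ)..T₁, C * (2 * M s) ^ 2)
        = C * ∫ s in (0:ℝ)..T₁, (2 * φ₀ + 2 * ∫ τ in (0:ℝ)..s, g τ) ^ 2 := by
      rw [← intervalIntegral.integral_const_mul]
      apply intervalIntegral.integral_congr
      intro s _
      rw [hMdef, hGdef]; dsimp only
      ring
    rw [hsplit, hc1]
    exact hsmall
  have hAmono : ∀ x ∈ Icc (0:ℝ) T₁, A x ≤ A T₁ := by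
    intro x hx
    have hxT : x ∈ Icc (0:ℝ) T := hsub hx
    have h1 : IntervalIntegrable a volume 0 x := cgw_intervalIntegrable hac ⟨le_rfl, hT.le⟩ hxT
    have h2 : IntervalIntegrable a volume x T₁ := cgw_intervalIntegrable hac hxT hT₁
    have hadd : A x + (∫ s in x..T₁, a s) = A T₁ :=
      intervalIntegral.integral_add_adjacent_intervals h1 h2
    have hpos : 0 ≤ ∫ s in x..T₁, a s :=
      intervalIntegral.integral_nonneg hx.2
        (fun s hs => hann s ⟨hx.1.trans hs.1, hs.2.trans hT₁T⟩)
    linarith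
  -- pieces for the fencing lemma (before making the abbreviations opaque)
  have hf' : ∀ x ∈ Ico (0:ℝ) T₁, HasDerivWithinAt F (φ' x + ψ x) (Ici x) x := by
    intro x hx
    have hxT : x ∈ Ico (0:ℝ) T := ⟨hx.1, lt_of_lt_of_le hx.2 hT₁T⟩
    exact ((hφ_deriv x ⟨hxT.1, hxT.2.le⟩).hasDerivWithinAt).add
      (cgw_primitive_hasDerivWithinAt hψ_cont hxT)
  have hA' : ∀ x ∈ Ico (0:ℝ) T₁, HasDerivWithinAt A (a x) (Ici x) x := by
    intro x hx
    exact cgw_primitive_hasDerivWithinAt hac ⟨hx.1, lt_of_lt_of_le hx.2 hT₁T⟩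
  have hM' : ∀ x ∈ Ico (0:ℝ) T₁, HasDerivWithinAt M (g x) (Ici x) x := by
    intro x hx
    have := cgw_primitive_hasDerivWithinAt hg_cont
      (show x ∈ Ico (0:ℝ) T from ⟨hx.1, lt_of_lt_of_le hx.2 hT₁T⟩)
    simpa only [hMdef, zero_add] using this.const_add φ₀
  have hA0 : A 0 = 0 := intervalIntegral.integral_same
  have hG0 : G 0 = 0 := intervalIntegral.integral_same
  have hΨ0 : Ψ 0 = 0 := intervalIntegral.integral_same
  have hΨeq : ∀ u, Ψ u = ∫ s in (0:ℝ)..u, ψ s := fun u => by rw [hΨdef]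
  have hGeq : ∀ u, G u = ∫ s in (0:ℝ)..u, g s := fun u => by rw [hGdef]
  -- now make everything opaque so that arithmetic tactics do not unfold integrals
  clear_value G Ψ M a A F B
  have hB' : ∀ x ∈ Ico (0:ℝ) T₁, HasDerivWithinAt B
      (3 / 2 * ((Real.exp (A x) * a x) * M x + Real.exp (A x) * g x)) (Ici x) x := by
    intro x hx
    rw [hBdef]
    exact (((hA' x hx).exp).mul (hM' x hx)).const_mul (3 / 2 : ℝ)
  have ha0 : F 0 ≤ B 0 := by
    rw [hFdef, hBdef, hMdef]
    dsimp only
    rw [hA0, hG0, hΨ0, hφ0, Real.exp_zero]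
    linarith
  have hbound : ∀ x ∈ Ico (0:ℝ) T₁, F x = B x →
      φ' x + ψ x < 3 / 2 * ((Real.exp (A x) * a x) * M x + Real.exp (A x) * g x) := by
    intro x hx hFB
    have hxIcc₁ : x ∈ Icc (0:ℝ) T₁ := ⟨hx.1, hx.2.le⟩
    have hxT : x ∈ Icc (0:ℝ) T := hsub hxIcc₁
    have hφnn := hφ_nonneg x hxT
    have hgx := hg_pos x hxT
    have hMx := hMnn x hxT
    have hax := hann x hxT
    have hAx := hAnn x hxT
    have hKx : Real.exp (A x) ≤ Real.exp ((1 / 2) * Real.log (3 / 2)) :=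
      Real.exp_le_exp.mpr ((hAmono x hxIcc₁).trans hAT₁)
    have hE2 : Real.exp ((1 / 2) * Real.log (3 / 2)) ^ 2 = 3 / 2 := by
      rw [sq, ← Real.exp_add,
        show (1 / 2) * Real.log (3 / 2) + (1 / 2) * Real.log (3 / 2) = Real.log (3 / 2) by ring,
        Real.exp_log (by norm_num : (0:ℝ) < 3 / 2)]
    have hEpos : (0:ℝ) < Real.exp ((1 / 2) * Real.log (3 / 2)) := Real.exp_pos _
    have hK2 : 3 / 2 * Real.exp (A x) ≤ 2 := by
      nlinarith only [Real.exp_pos (A x), hKx, hE2, hEpos]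
    have hΨx := hΨnn x hxT
    have hexp1 : (1:ℝ) ≤ Real.exp (A x) := Real.one_le_exp hAx
    have hFeq : F x = φ x + Ψ x := by rw [hFdef]
    have hBeq : B x = 3 / 2 * (Real.exp (A x) * M x) := by rw [hBdef]
    have haeq : a x = C * (2 * M x) ^ 2 + h x := by rw [hadef]
    have hφF : φ x ≤ B x := by rw [← hFB, hFeq]; linarith only [hΨx]
    have hB2M : B x ≤ 2 * M x := by
      have := mul_le_mul_of_nonneg_right hK2 hMx
      rw [hBeq]; nlinarith only [this]
    have hφ2M : φ x ≤ 2 * M x := hφF.trans hB2M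
    have hcube : C * (φ x) ^ 3 ≤ C * (2 * M x) ^ 2 * φ x := by
      nlinarith only [mul_nonneg (mul_nonneg hC.le hφnn)
        (mul_nonneg (sub_nonneg.mpr hφ2M)
          (by linarith only [hφnn, hφ2M] : (0:ℝ) ≤ 2 * M x + φ x))]
    have h1 : φ' x + ψ x ≤ a x * φ x + g x := by
      have hiq := hineq x hxT
      rw [haeq]
      nlinarith only [hiq, hcube]
    have h2 : a x * φ x ≤ a x * B x := mul_le_mul_of_nonneg_left hφF hax
    have h3 : g x < 3 / 2 * Real.exp (A x) * g x := by
      nlinarith only [mul_pos hgx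
        (show (0:ℝ) < 3 / 2 * Real.exp (A x) - 1 by linarith only [hexp1])]
    have hBrw : 3 / 2 * ((Real.exp (A x) * a x) * M x + Real.exp (A x) * g x)
        = a x * B x + 3 / 2 * Real.exp (A x) * g x := by
      rw [hBeq]; ring
    rw [hBrw]
    linarith only [h1, h2, h3]
  have hfence : ∀ u ∈ Icc (0:ℝ) T₁, F u ≤ B u :=
    image_le_of_deriv_right_lt_deriv_boundary' (f' := fun x => φ' x + ψ x)
      (B' := fun x => 3 / 2 * ((Real.exp (A x) * a x) * M x + Real.exp (A x) * g x))
      (hFc.mono hsub) hf' ha0 (hBc.mono hsub) hB' hbound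
  -- conclude
  intro t ht
  have htT : t ∈ Icc (0:ℝ) T := hsub ht
  have h1 : F t ≤ B t := hfence t ht
  have hKx : Real.exp (A t) ≤ Real.exp ((1 / 2) * Real.log (3 / 2)) :=
    Real.exp_le_exp.mpr ((hAmono t ht).trans hAT₁)
  have hE2 : Real.exp ((1 / 2) * Real.log (3 / 2)) ^ 2 = 3 / 2 := by
    rw [sq, ← Real.exp_add,
      show (1 / 2) * Real.log (3 / 2) + (1 / 2) * Real.log (3 / 2) = Real.log (3 / 2) by ring,
      Real.exp_log (by norm_num : (0:ℝ) < 3 / 2)]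
  have hEpos : (0:ℝ) < Real.exp ((1 / 2) * Real.log (3 / 2)) := Real.exp_pos _
  have hK2 : 3 / 2 * Real.exp (A t) ≤ 2 := by
    nlinarith only [Real.exp_pos (A t), hKx, hE2, hEpos]
  have hMt := hMnn t htT
  have h2 : B t ≤ 2 * M t := by
    have := mul_le_mul_of_nonneg_right hK2 hMt
    rw [hBdef]; nlinarith only [this]
  have hFeq : F t = φ t + Ψ t := by rw [hFdef]
  have hMeq : M t = φ₀ + G t := by rw [hMdef]
  rw [← hΨeq t, ← hGeq t]
  rw [hFeq] at h1
  rw [hMeq] at h2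
  linarith only [h1, h2]
end

section
/- There exists a constant C > 0 such that for every continuously differentiable function f : ℝ³ → ℝ with compact support, ‖f‖_{L³(ℝ³)} ≤ C · ‖f‖_{L²(ℝ³)}^{1/2} · ‖∇f‖_{L²(ℝ³)}^{1/2}, where ∇f denotes the (Fréchet) derivative of f and ‖∇f‖_{L²(ℝ³)} is the L² norm (with respect to Lebesgue measure on ℝ³) of the pointwise operator norm of ∇f. -/
/-!
Writing `‖f‖ = ‖f‖ ^ θ * ‖f‖ ^ (1 - θ)` and applying Hölder's inequality gives the interpolation
`‖f‖₃ ≤ ‖f‖₂ ^ (1/2) * ‖f‖₆ ^ (1/2)`. In three dimensions the Gagliardo–Nirenberg–Sobolev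
inequality bounds `‖f‖₆` by `‖∇f‖₂`, since `1/6 = 1/2 - 1/3`.
-/

open MeasureTheory ENNReal NNReal Module

theorem eLpNorm_le_eLpNorm_rpow_mul_eLpNorm_rpow {α E : Type*} [MeasurableSpace α]
    [NormedAddCommGroup E] {μ : Measure α} {f : α → E} (hf : AEStronglyMeasurable f μ)
    {p q r : ℝ≥0∞} {θ : ℝ} (hθ₀ : 0 < θ) (hθ₁ : θ < 1)
    (hr : r⁻¹ = ENNReal.ofReal θ / p + ENNReal.ofReal (1 - θ) / q) :
    eLpNorm f r μ ≤ eLpNorm f p μ ^ θ * eLpNorm f q μ ^ (1 - θ) := by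
  have hθ₁' : 0 < 1 - θ := sub_pos.mpr hθ₁
  have hmeas : ∀ t : ℝ, AEStronglyMeasurable (fun x => ‖f x‖ ^ t) μ := fun t =>
    (hf.norm.aemeasurable.pow_const t).aestronglyMeasurable
  have hsplit : ∀ x, ‖f x‖ = ‖f x‖ ^ θ * ‖f x‖ ^ (1 - θ) := fun x => by
    rw [← Real.rpow_add' (norm_nonneg _) (by norm_num), add_sub_cancel, Real.rpow_one]
  have hnorm : ∀ {s : ℝ} (hs : 0 < s) (t : ℝ≥0∞),
      eLpNorm (fun x => ‖f x‖ ^ s) (t / ENNReal.ofReal s) μ = eLpNorm f t μ ^ s := fun hs t => by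
    rw [eLpNorm_norm_rpow f hs, ENNReal.div_mul_cancel (by simpa using hs) ofReal_ne_top]
  have : HolderTriple (p / ENNReal.ofReal θ) (q / ENNReal.ofReal (1 - θ)) r :=
    ⟨by rwa [ENNReal.inv_div (.inl ofReal_ne_top) (.inl (by simpa using hθ₀)),
      ENNReal.inv_div (.inl ofReal_ne_top) (.inl (by simpa using hθ₁')), eq_comm]⟩
  calc eLpNorm f r μ = eLpNorm (fun x => ‖f x‖ ^ θ * ‖f x‖ ^ (1 - θ)) r μ := by
        simp only [← hsplit, eLpNorm_norm]
    _ ≤ eLpNorm (fun x => ‖f x‖ ^ θ) (p / ENNReal.ofReal θ) μ *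
          eLpNorm (fun x => ‖f x‖ ^ (1 - θ)) (q / ENNReal.ofReal (1 - θ)) μ := by
        simpa using eLpNorm_le_eLpNorm_mul_eLpNorm_of_nnnorm (hmeas θ) (hmeas (1 - θ))
          (fun a b : ℝ => a * b) 1 (.of_forall fun x => by simp [nnnorm_mul])
    _ = eLpNorm f p μ ^ θ * eLpNorm f q μ ^ (1 - θ) := by rw [hnorm hθ₀, hnorm hθ₁']

section FiniteDimensional

variable {E F : Type*} [NormedAddCommGroup E] [NormedSpace ℝ E] [MeasurableSpace E]
  [BorelSpace E] [FiniteDimensional ℝ E] [NormedAddCommGroup F] [NormedSpace ℝ F]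
  [FiniteDimensional ℝ F]

theorem eLpNorm_three_le_eLpNorm_two_rpow_mul_eLpNorm_fderiv_two_rpow (μ : Measure E)
    [μ.IsAddHaarMeasure] (hE : finrank ℝ E = 3) {f : E → F} (hf : ContDiff ℝ 1 f)
    (h2f : HasCompactSupport f) :
    eLpNorm f 3 μ ≤ (SNormLESNormFDerivOfEqConst F μ 2 : ℝ≥0∞) ^ (1 / 2 : ℝ) *
      eLpNorm f 2 μ ^ (1 / 2 : ℝ) * eLpNorm (fderiv ℝ f) 2 μ ^ (1 / 2 : ℝ) := by
  have hsobolev :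
      eLpNorm f 6 μ ≤ SNormLESNormFDerivOfEqConst F μ 2 * eLpNorm (fderiv ℝ f) 2 μ := by
    exact_mod_cast eLpNorm_le_eLpNorm_fderiv_of_eq μ hf h2f (p := 2) (p' := 6) (by norm_num)
      (by simp [hE]) (by rw [hE]; norm_num)
  have hexponents :
      (3 : ℝ≥0∞)⁻¹ = ENNReal.ofReal (1 / 2) / 2 + ENNReal.ofReal (1 - 1 / 2) / 6 := by
    rw [← ENNReal.toReal_eq_toReal_iff' (by simp) (by finiteness),
      ENNReal.toReal_add (by finiteness) (by finiteness)]
    norm_num [ENNReal.toReal_div]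
  calc eLpNorm f 3 μ ≤ eLpNorm f 2 μ ^ (1 / 2 : ℝ) * eLpNorm f 6 μ ^ (1 - 1 / 2 : ℝ) :=
        eLpNorm_le_eLpNorm_rpow_mul_eLpNorm_rpow hf.continuous.aestronglyMeasurable
          (by norm_num) (by norm_num) hexponents
    _ ≤ eLpNorm f 2 μ ^ (1 / 2 : ℝ) *
          (SNormLESNormFDerivOfEqConst F μ 2 * eLpNorm (fderiv ℝ f) 2 μ) ^ (1 / 2 : ℝ) := by
        norm_num only
        gcongr
    _ = _ := by rw [ENNReal.mul_rpow_of_nonneg _ _ (by norm_num)]; ring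

end FiniteDimensional

/-- Gagliardo–Nirenberg (Ladyzhenskaya-type) interpolation inequality in ℝ³:
`‖f‖_{L³} ≤ C ‖f‖_{L²}^{1/2} ‖∇f‖_{L²}^{1/2}` for smooth compactly supported
functions. -/
theorem L3_interpolation_R3 :
    ∃ C : ℝ, 0 < C ∧
      ∀ f : EuclideanSpace ℝ (Fin 3) → ℝ, ContDiff ℝ 1 f → HasCompactSupport f →
        (eLpNorm f 3 volume).toReal ≤
          C * (eLpNorm f 2 volume).toReal ^ ((1 : ℝ) / 2) *
            (eLpNorm (fun x => ‖fderiv ℝ f x‖) 2 volume).toReal ^ ((1 : ℝ) / 2) := by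
  let c := SNormLESNormFDerivOfEqConst ℝ (volume : Measure (EuclideanSpace ℝ (Fin 3))) 2
  let C : ℝ≥0 := max 1 (c ^ (1 / 2 : ℝ))
  refine ⟨C, one_pos.trans_le (le_max_left _ _), fun f hf h2f => ?_⟩
  have hf2 : eLpNorm f 2 volume ≠ ⊤ :=
    (hf.continuous.memLp_of_hasCompactSupport h2f).eLpNorm_ne_top
  have hdf2 : eLpNorm (fderiv ℝ f) 2 volume ≠ ⊤ :=
    ((hf.continuous_fderiv one_ne_zero).memLp_of_hasCompactSupport (h2f.fderiv ℝ)).eLpNorm_ne_top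
  have hbound : eLpNorm f 3 volume ≤
      C * eLpNorm f 2 volume ^ (1 / 2 : ℝ) * eLpNorm (fderiv ℝ f) 2 volume ^ (1 / 2 : ℝ) := by
    refine (eLpNorm_three_le_eLpNorm_two_rpow_mul_eLpNorm_fderiv_two_rpow volume
      finrank_euclideanSpace_fin hf h2f).trans ?_
    rw [← ENNReal.coe_rpow_of_nonneg _ (by norm_num)]
    gcongr
    exact_mod_cast le_max_right _ _
  rw [eLpNorm_norm]
  simpa [ENNReal.toReal_mul, ← ENNReal.toReal_rpow] using
    ENNReal.toReal_mono (by finiteness) hbound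
end
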